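/- arXiv:1806.10896 — 2 statements merged into one kernel-verified Lean document; each statement's English description precedes it below -/
import Mathlib

section
/- For every odd positive integer n, the sum over k from 0 to n of binomial(n,k)*binomial(n+k,k)*binomial(2k,k) / ((-4)^k * (k+1)) equals (n/(n+1)) * binomial(n-1, (n-1)/2)^2 / 16^((n-1)/2) (as rational numbers). -/
/-!
Write `S n = ∑ₖ F n k` for the sum, with the same summand for every `n`. Zeilberger's algorithm
produces a certificate `G` with
`n (n+1) F n k + (2n+3) F (n+1) k - (n+2)(n+3) F (n+2) k = G n (k+1) - G n k`,
so summing over `k` gives `(n+2)(n+3) S (n+2) = n (n+1) S n + (2n+3) S (n+1)`.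
With `c m = (2m choose m)² / 16^m`, the values `S (2m) = c m` and `S (2m+1) = (2m+1)/(2m+2) · c m`
satisfy this recurrence, because `c (m+1) = ((2m+1)/(2m+2))² · c m`; induction on `m` does the rest.
-/

open Finset

theorem Nat.cast_choose_mul_add_one {R : Type*} [CommRing R] (n k : ℕ) :
    (n.choose k : R) * (n + 1) = (n + 1).choose k * (n + 1 - k) := by
  rcases le_or_gt k (n + 1) with hk | hk
  · have h := congrArg (Nat.cast (R := R)) (Nat.choose_mul_succ_eq n k)
    push_cast [Nat.cast_sub hk] at h
    exact h
  · simp [Nat.choose_eq_zero_of_lt hk, Nat.choose_eq_zero_of_lt (n.lt_succ_self.trans hk)]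

theorem Nat.cast_choose_succ_right_mul {R : Type*} [CommRing R] (n k : ℕ) :
    (n.choose (k + 1) : R) * (k + 1) = n.choose k * (n - k) := by
  rcases le_or_gt k n with hk | hk
  · have h := congrArg (Nat.cast (R := R)) (Nat.choose_succ_right_eq n k)
    push_cast [Nat.cast_sub hk] at h
    exact h
  · simp [Nat.choose_eq_zero_of_lt hk, Nat.choose_eq_zero_of_lt (hk.trans k.lt_succ_self)]

namespace BinomialSum

def summand (n k : ℕ) : ℚ :=
  (n.choose k * (n + k).choose k * (2 * k).choose k : ℚ) / ((-4) ^ k * (k + 1))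

def binomSum (n : ℕ) : ℚ := ∑ k ∈ range (n + 1), summand n k

def certificate (n k : ℕ) : ℚ :=
  2 * (2 * n + 3) / ((n + 1) * (n + 2)) *
    (k ^ 2 * (n + 2).choose k * (n + k).choose k * (2 * k).choose k / (-4) ^ k)

theorem summand_recurrence (n k : ℕ) :
    n * (n + 1) * summand n k + (2 * n + 3) * summand (n + 1) k
        - (n + 2) * (n + 3) * summand (n + 2) k
      = certificate n (k + 1) - certificate n k := by
  have hn1 : (n + 1 : ℚ) ≠ 0 := by positivity
  have hn2 : (n + 2 : ℚ) ≠ 0 := by positivity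
  have hk1 : (k + 1 : ℚ) ≠ 0 := by positivity
  have h0 : (n.choose k : ℚ) = (n + 1).choose k * (n + 1 - k) / (n + 1) :=
    eq_div_of_mul_eq hn1 (Nat.cast_choose_mul_add_one n k)
  have h1 : ((n + 1).choose k : ℚ) = (n + 2).choose k * (n + 2 - k) / (n + 2) := by
    rw [eq_div_iff hn2]
    have := Nat.cast_choose_mul_add_one (R := ℚ) (n + 1) k
    push_cast at this
    linear_combination this
  have h2 : ((n + 1 + k).choose k : ℚ) = (n + k).choose k * (n + k + 1) / (n + 1) := by
    rw [eq_div_iff hn1]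
    have := Nat.cast_choose_mul_add_one (R := ℚ) (n + k) k
    rw [show n + 1 + k = n + k + 1 by ring]
    push_cast at this
    linear_combination -this
  have h3 : ((n + 2 + k).choose k : ℚ) = (n + 1 + k).choose k * (n + k + 2) / (n + 2) := by
    rw [eq_div_iff hn2]
    have := Nat.cast_choose_mul_add_one (R := ℚ) (n + 1 + k) k
    rw [show n + 2 + k = n + 1 + k + 1 by ring]
    push_cast at this
    linear_combination -this
  have h4 : ((n + 2).choose (k + 1) : ℚ) = (n + 2).choose k * (n + 2 - k) / (k + 1) := by
    rw [eq_div_iff hk1]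
    have := Nat.cast_choose_succ_right_mul (R := ℚ) (n + 2) k
    push_cast at this
    linear_combination this
  have h5 : ((n + (k + 1)).choose (k + 1) : ℚ) = (n + k).choose k * (n + k + 1) / (k + 1) := by
    rw [eq_div_iff hk1]
    have := congrArg (Nat.cast (R := ℚ)) (Nat.add_one_mul_choose_eq (n + k) k)
    rw [show n + (k + 1) = n + k + 1 by ring]
    push_cast at this
    linear_combination -this
  have h6 : ((2 * (k + 1)).choose (k + 1) : ℚ) = 2 * (2 * k + 1) * (2 * k).choose k / (k + 1) := by
    rw [eq_div_iff hk1]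
    have := congrArg (Nat.cast (R := ℚ)) (Nat.succ_mul_centralBinom_succ k)
    simp only [Nat.centralBinom_eq_two_mul_choose] at this
    push_cast at this
    linear_combination this
  simp only [summand, certificate]
  push_cast
  rw [h3, h2, h0, h1, h4, h5, h6]
  field_simp
  ring

theorem sum_range_summand_of_le {n N : ℕ} (h : n + 1 ≤ N) :
    ∑ k ∈ range N, summand n k = binomSum n := by
  refine (sum_subset (range_subset_range.2 h) fun k _ hk => ?_).symm
  simp [summand, Nat.choose_eq_zero_of_lt (show n < k by simpa using hk)]

theorem binomSum_recurrence (n : ℕ) :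
    (n + 2) * (n + 3) * binomSum (n + 2)
      = n * (n + 1) * binomSum n + (2 * n + 3) * binomSum (n + 1) := by
  have telescope : ∑ k ∈ range (n + 3), (n * (n + 1) * summand n k
      + (2 * n + 3) * summand (n + 1) k - (n + 2) * (n + 3) * summand (n + 2) k) = 0 := by
    rw [sum_congr rfl fun k _ => summand_recurrence n k, sum_range_sub]
    simp [certificate]
  rw [sum_sub_distrib, sum_add_distrib, ← mul_sum, ← mul_sum, ← mul_sum,
    sum_range_summand_of_le (by omega), sum_range_summand_of_le (by omega),
    sum_range_summand_of_le le_rfl] at telescope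
  linear_combination -telescope

theorem sq_centralBinom_div_sixteen_pow_succ (m : ℕ) :
    ((m + 1).centralBinom : ℚ) ^ 2 / 16 ^ (m + 1)
      = ((2 * m + 1) / (2 * m + 2)) ^ 2 * ((m.centralBinom : ℚ) ^ 2 / 16 ^ m) := by
  have h : ((m + 1).centralBinom : ℚ) = 2 * (2 * m + 1) * m.centralBinom / (m + 1) := by
    rw [eq_div_iff (by positivity), mul_comm]
    exact_mod_cast Nat.succ_mul_centralBinom_succ m
  rw [h]
  field_simp
  ring

theorem binomSum_two_mul_and_two_mul_add_one (m : ℕ) :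
    binomSum (2 * m) = (m.centralBinom : ℚ) ^ 2 / 16 ^ m ∧
      binomSum (2 * m + 1) = (2 * m + 1) / (2 * m + 2) * ((m.centralBinom : ℚ) ^ 2 / 16 ^ m) := by
  induction m with
  | zero => norm_num [binomSum, summand, sum_range_succ]
  | succ m ih =>
    obtain ⟨h_even, h_odd⟩ := ih
    have rec_even := binomSum_recurrence (2 * m)
    have rec_odd := binomSum_recurrence (2 * m + 1)
    rw [show 2 * m + 1 + 2 = 2 * m + 3 by ring, show 2 * m + 1 + 1 = 2 * m + 2 by ring] at rec_odd
    push_cast at rec_even rec_odd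
    rw [sq_centralBinom_div_sixteen_pow_succ, show 2 * (m + 1) = 2 * m + 2 by ring]
    push_cast
    set c := (m.centralBinom : ℚ) ^ 2 / 16 ^ m
    have h_even' : binomSum (2 * m + 2) = ((2 * m + 1) / (2 * m + 2)) ^ 2 * c := by
      apply mul_left_cancel₀ (show (2 * m + 2 : ℚ) * (2 * m + 3) ≠ 0 by positivity)
      rw [rec_even, h_even, h_odd]
      field_simp
      ring
    refine ⟨h_even', ?_⟩
    rw [show 2 * m + 2 + 1 = 2 * m + 3 by ring]
    apply mul_left_cancel₀ (show (2 * m + 1 + 2 : ℚ) * (2 * m + 1 + 3) ≠ 0 by positivity)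
    rw [rec_odd, h_odd, h_even']
    field_simp
    ring

end BinomialSum

open BinomialSum in
theorem id1_odd_general (n : ℕ) (hn : Odd n) :
    ∑ k ∈ Finset.range (n + 1),
        (Nat.choose n k * Nat.choose (n + k) k * Nat.choose (2 * k) k : ℚ)
          / ((-4) ^ k * (k + 1))
      = ((n : ℚ) / (n + 1)) * (Nat.choose (n - 1) ((n - 1) / 2) : ℚ) ^ 2 / 16 ^ ((n - 1) / 2) := by
  obtain ⟨m, rfl⟩ := hn
  rw [show 2 * m + 1 - 1 = 2 * m by omega, Nat.mul_div_cancel_left m two_pos,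
    ← Nat.centralBinom_eq_two_mul_choose, mul_div_assoc]
  push_cast
  rw [show (2 * m + 1 + 1 : ℚ) = 2 * m + 2 by ring]
  exact (binomSum_two_mul_and_two_mul_add_one m).2

theorem id1_odd (n : ℕ) (hn : Odd n) (hn0 : 0 < n) :
    ∑ k ∈ Finset.range (n + 1),
        (Nat.choose n k * Nat.choose (n + k) k * Nat.choose (2 * k) k : ℚ)
          / ((-4) ^ k * (k + 1))
      = ((n : ℚ) / (n + 1)) * (Nat.choose (n - 1) ((n - 1) / 2) : ℚ) ^ 2 / 16 ^ ((n - 1) / 2) :=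
  id1_odd_general n hn
end

section
/- For every even positive integer n, the sum over k from 0 to n of binomial(n,k)*binomial(n+k,k)*binomial(2k,k) / ((-4)^k * (k+1)^3) equals -2/(n(n+1)) + ((2n+1)^2/(n(n+1))) * binomial(n, n/2)^2 / 16^(n/2) (as rational numbers). -/
/-!
Zeilberger's algorithm finds a certificate `G(n, k)` for which the summand `F(n, k)` satisfies
`n³(n+2) F(n,k) + (6n³+27n²+37n+15) F(n+1,k) - (n+1)(n+3)³ F(n+2,k) = G(n,k+1) - G(n,k)`.
Summing over `k` telescopes, so the sum `S(n)` obeys this second-order recurrence with right-hand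
side `-2(2n+3)`. Since the recurrence links consecutive `n`, the even closed form is proved together
with its companion for odd `n`: both sides satisfy the same recurrence and agree at `n = 1, 2`.
-/

open Finset

theorem Nat.cast_choose_succ_right_eq {R : Type*} [CommRing R] (m k : ℕ) :
    (m.choose (k + 1) : R) * (k + 1) = m.choose k * (m - k) := by
  rcases le_or_gt k m with h | h
  · exact_mod_cast congrArg (Nat.cast : ℕ → R) (Nat.choose_succ_right_eq m k)
  · simp [Nat.choose_eq_zero_of_lt h, Nat.choose_eq_zero_of_lt (Nat.lt_succ_of_lt h)]

theorem Nat.cast_choose_mul_succ_eq {R : Type*} [CommRing R] (m k : ℕ) :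
    (m.choose k : R) * (m + 1) = (m + 1).choose k * (m + 1 - k) := by
  rcases le_or_gt k (m + 1) with h | h
  · exact_mod_cast congrArg (Nat.cast : ℕ → R) (Nat.choose_mul_succ_eq m k)
  · simp [Nat.choose_eq_zero_of_lt h, Nat.choose_eq_zero_of_lt (Nat.lt_of_succ_lt h)]

theorem Nat.cast_add_succ_choose_mul {R : Type*} [CommRing R] (n k : ℕ) :
    ((n + 1 + k).choose k : R) * (n + 1) = (n + k).choose k * (n + k + 1) := by
  have h := Nat.cast_choose_mul_succ_eq (R := R) (n + k) k
  rw [show n + k + 1 = n + 1 + k by omega] at h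
  push_cast at h
  linear_combination -h

theorem Nat.cast_centralBinom_succ {K : Type*} [Field K] [CharZero K] (m : ℕ) :
    ((m + 1).centralBinom : K) = 2 * (2 * m + 1) * m.centralBinom / (m + 1) := by
  rw [eq_div_iff (Nat.cast_add_one_ne_zero m)]
  exact_mod_cast (mul_comm _ _).trans (Nat.succ_mul_centralBinom_succ m)

namespace Id3

def term (n k : ℕ) : ℚ :=
  (n.choose k * (n + k).choose k * (2 * k).choose k : ℚ) / ((-4) ^ k * (k + 1) ^ 3)

def certificate (n k : ℕ) : ℚ :=
  2 * (2 * n + 3) * ((n + 2).choose k * (n + k).choose k * (2 * k).choose k : ℚ) / (-4) ^ k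

def recurrenceOp (u : ℕ → ℚ) (n : ℕ) : ℚ :=
  (n : ℚ) ^ 3 * (n + 2) * u n + (6 * (n : ℚ) ^ 3 + 27 * n ^ 2 + 37 * n + 15) * u (n + 1)
    - (n + 1) * ((n : ℚ) + 3) ^ 3 * u (n + 2)

theorem recurrenceOp_term (n k : ℕ) :
    recurrenceOp (term · k) n = certificate n (k + 1) - certificate n k := by
  have hn1 : (n : ℚ) + 1 ≠ 0 := by positivity
  have hn2 : (n : ℚ) + 2 ≠ 0 := by positivity
  have hk1 : (k : ℚ) + 1 ≠ 0 := by positivity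
  have hchoose : (n.choose k : ℚ) = (n + 1).choose k * (n + 1 - k) / (n + 1) := by
    rw [eq_div_iff hn1, Nat.cast_choose_mul_succ_eq]
  have hchoose_succ : ((n + 1).choose k : ℚ) = (n + 2).choose k * (n + 2 - k) / (n + 2) := by
    rw [eq_div_iff hn2]
    simpa [add_assoc, one_add_one_eq_two] using Nat.cast_choose_mul_succ_eq (R := ℚ) (n + 1) k
  have hchoose_two_succ :
      ((n + 2).choose (k + 1) : ℚ) = (n + 2).choose k * (n + 2 - k) / (k + 1) := by
    rw [eq_div_iff hk1, Nat.cast_choose_succ_right_eq]; push_cast; ring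
  have hchoose_add_succ :
      ((n + 1 + k).choose k : ℚ) = (n + k).choose k * (n + k + 1) / (n + 1) := by
    rw [eq_div_iff hn1, Nat.cast_add_succ_choose_mul]
  have hchoose_add_two :
      ((n + 2 + k).choose k : ℚ) = (n + 1 + k).choose k * (n + k + 2) / (n + 2) := by
    rw [eq_div_iff hn2]
    have h := Nat.cast_add_succ_choose_mul (R := ℚ) (n + 1) k
    rw [show n + 1 + 1 + k = n + 2 + k by omega] at h
    push_cast at h
    linear_combination h
  have hchoose_add_succ_succ :
      ((n + (k + 1)).choose (k + 1) : ℚ) = (n + k).choose k * (n + k + 1) / (k + 1) := by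
    rw [eq_div_iff hk1]
    exact_mod_cast (Nat.add_one_mul_choose_eq (n + k) k).symm.trans (mul_comm _ _)
  have hcentral :
      ((2 * (k + 1)).choose (k + 1) : ℚ) = 2 * (2 * k + 1) * (2 * k).choose k / (k + 1) := by
    simpa only [← Nat.centralBinom_eq_two_mul_choose] using
      Nat.cast_centralBinom_succ (K := ℚ) k
  -- Reduced to `C(n+2,k)`, `C(n+k,k)`, `C(2k,k)`, these cancel: an identity of rational functions.
  simp only [recurrenceOp, term, certificate]
  rw [hchoose, hchoose_succ, hchoose_two_succ, hchoose_add_two, hchoose_add_succ,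
    hchoose_add_succ_succ, hcentral, pow_succ]
  field_simp
  ring

def lhs (n : ℕ) : ℚ := ∑ k ∈ range (n + 1), term n k

theorem term_eq_zero_of_lt {n k : ℕ} (h : n < k) : term n k = 0 := by
  simp [term, Nat.choose_eq_zero_of_lt h]

theorem sum_range_term_of_le {n N : ℕ} (h : n + 1 ≤ N) : ∑ k ∈ range N, term n k = lhs n :=
  (sum_subset (range_subset_range.mpr h) fun _ _ hkn =>
    term_eq_zero_of_lt (by simp_all)).symm

theorem certificate_zero (n : ℕ) : certificate n 0 = 2 * (2 * n + 3) := by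
  simp [certificate]

theorem certificate_eq_zero (n : ℕ) : certificate n (n + 3) = 0 := by
  simp [certificate]

theorem recurrenceOp_lhs (n : ℕ) : recurrenceOp lhs n = -2 * (2 * n + 3) := by
  have htel : ∑ k ∈ range (n + 3), recurrenceOp (term · k) n = -2 * (2 * n + 3) := by
    simp only [recurrenceOp_term, sum_range_sub (certificate n), certificate_zero,
      certificate_eq_zero]
    ring
  rw [← htel]
  simp only [recurrenceOp, sum_sub_distrib, sum_add_distrib, ← mul_sum]
  rw [sum_range_term_of_le (by omega), sum_range_term_of_le (by omega),
    sum_range_term_of_le (by omega)]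

def closedForm (n : ℕ) : ℚ :=
  if Even n then
    -2 / (n * (n + 1)) + (2 * (n : ℚ) + 1) ^ 2 / (n * (n + 1)) * (n.choose (n / 2)) ^ 2
      / 16 ^ (n / 2)
  else
    -2 / (n * (n + 1)) + (4 * (n : ℚ) ^ 4 + 8 * n ^ 3 + 3 * n ^ 2 - n + 1) / (n ^ 2 * (n + 1) ^ 2)
      * (n - 1).choose ((n - 1) / 2) * (n + 1).choose ((n + 1) / 2) / 4 ^ n

theorem closedForm_two_mul (m : ℕ) :
    closedForm (2 * m) = -2 / (2 * m * (2 * m + 1))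
      + (4 * (m : ℚ) + 1) ^ 2 / (2 * m * (2 * m + 1)) * m.centralBinom ^ 2 / 16 ^ m := by
  rw [closedForm, if_pos (even_two_mul m), Nat.mul_div_cancel_left m two_pos,
    ← Nat.centralBinom_eq_two_mul_choose]
  push_cast
  ring

theorem closedForm_two_mul_add_one (m : ℕ) :
    closedForm (2 * m + 1) = -2 / ((2 * m + 1) * (2 * m + 2))
      + (4 * (2 * (m : ℚ) + 1) ^ 4 + 8 * (2 * m + 1) ^ 3 + 3 * (2 * m + 1) ^ 2 - (2 * m + 1) + 1)
        / ((2 * m + 1) ^ 2 * (2 * m + 2) ^ 2)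
      * m.centralBinom * (m + 1).centralBinom / (4 * 16 ^ m) := by
  rw [closedForm, if_neg (Nat.not_even_two_mul_add_one m), Nat.add_sub_cancel,
    Nat.mul_div_cancel_left m two_pos, show 2 * m + 1 + 1 = 2 * (m + 1) by ring,
    Nat.mul_div_cancel_left _ two_pos, ← Nat.centralBinom_eq_two_mul_choose,
    ← Nat.centralBinom_eq_two_mul_choose, pow_succ' (4 : ℚ), pow_mul]
  push_cast
  ring

theorem recurrenceOp_closedForm (n : ℕ) :
    recurrenceOp closedForm (n + 1) = -2 * (2 * ((n + 1 : ℕ) : ℚ) + 3) := by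
  unfold recurrenceOp
  rcases Nat.even_or_odd' n with ⟨m, rfl | rfl⟩
  · rw [closedForm_two_mul_add_one, show 2 * m + 1 + 1 = 2 * (m + 1) by ring, closedForm_two_mul,
      show 2 * m + 1 + 2 = 2 * (m + 1) + 1 by ring, closedForm_two_mul_add_one,
      Nat.cast_centralBinom_succ (m + 1), Nat.cast_centralBinom_succ m]
    push_cast
    field_simp
    ring
  · rw [show 2 * m + 1 + 1 = 2 * (m + 1) by ring, closedForm_two_mul,
      closedForm_two_mul_add_one,
      show 2 * (m + 1) + 2 = 2 * (m + 2) by ring, closedForm_two_mul,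
      Nat.cast_centralBinom_succ (m + 1)]
    push_cast
    field_simp
    ring

theorem eq_of_recurrenceOp_eq {u v : ℕ → ℚ}
    (h : ∀ n, recurrenceOp u (n + 1) = recurrenceOp v (n + 1)) (h₁ : u 1 = v 1)
    (h₂ : u 2 = v 2) (n : ℕ) : u (n + 1) = v (n + 1) := by
  suffices ∀ n, u (n + 1) = v (n + 1) ∧ u (n + 2) = v (n + 2) from (this n).1
  intro n
  induction n with
  | zero => exact ⟨h₁, h₂⟩
  | succ n ih =>
    refine ⟨ih.2, ?_⟩
    have hrec := h n
    simp only [recurrenceOp, ih.1, ih.2] at hrec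
    have hlead : ((n + 1 : ℕ) + 1 : ℚ) * ((n + 1 : ℕ) + 3) ^ 3 ≠ 0 := by positivity
    exact mul_left_cancel₀ hlead (by linear_combination -hrec)

theorem lhs_eq_closedForm (n : ℕ) : lhs (n + 1) = closedForm (n + 1) := by
  refine eq_of_recurrenceOp_eq (fun _ => by rw [recurrenceOp_lhs, recurrenceOp_closedForm]) ?_ ?_ n
  · norm_num [lhs, term, closedForm, sum_range_succ]
  · norm_num [lhs, term, closedForm, sum_range_succ, Nat.choose]

end Id3

theorem id3_even (n : ℕ) (hn : Even n) (hn0 : 0 < n) :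
    ∑ k ∈ Finset.range (n + 1),
        (Nat.choose n k * Nat.choose (n + k) k * Nat.choose (2 * k) k : ℚ)
          / ((-4) ^ k * (k + 1) ^ 3)
      = -2 / ((n : ℚ) * (n + 1))
          + ((2 * (n : ℚ) + 1) ^ 2 / ((n : ℚ) * (n + 1)))
              * (Nat.choose n (n / 2) : ℚ) ^ 2 / 16 ^ (n / 2) := by
  obtain ⟨m, rfl⟩ := Nat.exists_eq_add_one_of_ne_zero hn0.ne'
  have h := Id3.lhs_eq_closedForm m
  rwa [Id3.closedForm, if_pos hn] at h
end
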